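/- arXiv:1802.09285 — 4 statements merged into one kernel-verified Lean document; each statement's English description precedes it below -/
import Mathlib

section
/- Let k > 1 be an integer, α = 4(1 − k⁻²), ϑ > 0, and let F₁, F₂ : ℝ → ℝ be differentiable functions satisfying F₁(z)F₂′(z) − F₁′(z)F₂(z) = −1 for all z ∈ ℝ. Define the vector fields on ℝ²: f₁(x) = √(ϑα)·(F₁(Ĵ(x)), 0), f₂(x) = √(ϑα)·(F₂(Ĵ(x)), 0), f₃(x) = √(ϑα)·(0, F₁(Ĵ(x))), f₄(x) = √(ϑα)·(0, F₂(Ĵ(x))), the 2πk-periodic signals v₁(θ) = cos θ · cos(θ/k), v₂(θ) = sin θ · cos(θ/k), v₃(θ) = cos θ · sin(θ/k), v₄(θ) = sin θ · sin(θ/k), and the averaging coefficients ν_{ij} = (1/(2πk)) ∫₀^{2πk} v_j(θ) (∫₀^θ v_i(τ) dτ) dθ for 1 ≤ i < j ≤ 4. Let G(x) = Σ_{1 ≤ i < j ≤ 4} ν_{ij} [f_i, f_j](x). Then for every x ∈ ℝ², the inner product ⟨G(x), ∇Ĵ(x)⟩ equals −ϑ ‖∇Ĵ(x)‖². -/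
/-- Euclidean inner product on ℝ². -/
def dot2 (a b : ℝ × ℝ) : ℝ := a.1 * b.1 + a.2 * b.2

/-- Lie bracket of two vector fields on ℝ²: [f,g](x) = Dg(x)f(x) − Df(x)g(x). -/
noncomputable def lieBracket (f g : ℝ × ℝ → ℝ × ℝ) (x : ℝ × ℝ) : ℝ × ℝ :=
  fderiv ℝ g x (f x) - fderiv ℝ f x (g x)

/-- Gradient of a scalar function on ℝ²: (∂₁J, ∂₂J). -/
noncomputable def grad2 (J : ℝ × ℝ → ℝ) (x : ℝ × ℝ) : ℝ × ℝ :=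
  (fderiv ℝ J x (1, 0), fderiv ℝ J x (0, 1))

/-- The 2πk-periodic dither signals v₁, v₂, v₃, v₄. -/
noncomputable def dither (k : ℕ) : Fin 4 → ℝ → ℝ
  | 0 => fun θ => Real.cos θ * Real.cos (θ / k)
  | 1 => fun θ => Real.sin θ * Real.cos (θ / k)
  | 2 => fun θ => Real.cos θ * Real.sin (θ / k)
  | 3 => fun θ => Real.sin θ * Real.sin (θ / k)

/-- Averaging coefficient ν_{ij} = (1/(2πk)) ∫₀^{2πk} v_j(θ) (∫₀^θ v_i(τ) dτ) dθ. -/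
noncomputable def avgCoeff (k : ℕ) (i j : Fin 4) : ℝ :=
  (1 / (2 * Real.pi * k)) *
    ∫ θ in (0:ℝ)..(2 * Real.pi * k), dither k j θ * ∫ τ in (0:ℝ)..θ, dither k i τ

/-- The four extremum-seeking vector fields: f₁ = √c·(F₁∘Ĵ, 0), f₂ = √c·(F₂∘Ĵ, 0),
f₃ = √c·(0, F₁∘Ĵ), f₄ = √c·(0, F₂∘Ĵ), where c = ϑα. -/
noncomputable def esVF (c : ℝ) (F1 F2 : ℝ → ℝ) (J : ℝ × ℝ → ℝ) : Fin 4 → ℝ × ℝ → ℝ × ℝ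
  | 0 => fun x => (Real.sqrt c * F1 (J x), 0)
  | 1 => fun x => (Real.sqrt c * F2 (J x), 0)
  | 2 => fun x => (0, Real.sqrt c * F1 (J x))
  | 3 => fun x => (0, Real.sqrt c * F2 (J x))

/-!
Each field has the form `f_i = φ_i(Ĵ) • e_i` with a constant direction `e_i`, so
`⟨[f_i, f_j], ∇Ĵ⟩ = (φ_i φ_j' - φ_i' φ_j)(Ĵ) ⬝ ∂_{e_i}Ĵ ⬝ ∂_{e_j}Ĵ`: the pairs with equal
profiles drop out, and for the others the Wronskian condition turns the prefactor into `∓ϑα`.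

The dithers are two-tone signals, e.g. `v₁ = (cos pθ + cos qθ)/2` with `p, q = 1 ± 1/k`, and both
tones are periodic on `[0, 2πk]`. Orthogonality of `sin`/`cos` over a full period then gives
`ν₁₂ = ν₃₄ = (1/(2p) + 1/(2q))/4 = 1/α` and `ν₁₄ = ν₂₃ = 0`, which leaves exactly `-ϑ‖∇Ĵ‖²`.
-/

open Real intervalIntegral

lemma integral_cos_mul_of_ne_zero {a : ℝ} (ha : a ≠ 0) (θ : ℝ) :
    ∫ τ in 0..θ, cos (a * τ) = sin (a * θ) / a := by
  rw [integral_comp_mul_left (fun x => cos x) ha, integral_cos, mul_zero, sin_zero, sub_zero,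
    smul_eq_mul, inv_mul_eq_div]

lemma integral_sin_mul_of_ne_zero {a : ℝ} (ha : a ≠ 0) (θ : ℝ) :
    ∫ τ in 0..θ, sin (a * τ) = (1 - cos (a * θ)) / a := by
  rw [integral_comp_mul_left (fun x => sin x) ha, integral_sin, mul_zero, cos_zero,
    smul_eq_mul, inv_mul_eq_div]

-- `m ∈ zmultiples (2π/T)` says that `cos (m θ)` and `sin (m θ)` are `T`-periodic.
lemma sin_mul_eq_zero_of_mem_zmultiples {T m : ℝ} (hT : T ≠ 0)
    (hm : m ∈ AddSubgroup.zmultiples (2 * π / T)) : sin (m * T) = 0 := by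
  obtain ⟨n, rfl⟩ := AddSubgroup.mem_zmultiples_iff.mp hm
  rw [zsmul_eq_mul, mul_assoc, div_mul_cancel₀ _ hT, ← mul_assoc, ← Int.cast_ofNat,
    ← Int.cast_mul]
  exact sin_int_mul_pi _

lemma cos_mul_eq_one_of_mem_zmultiples {T m : ℝ} (hT : T ≠ 0)
    (hm : m ∈ AddSubgroup.zmultiples (2 * π / T)) : cos (m * T) = 1 := by
  obtain ⟨n, rfl⟩ := AddSubgroup.mem_zmultiples_iff.mp hm
  rw [zsmul_eq_mul, mul_assoc, div_mul_cancel₀ _ hT]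
  exact cos_int_mul_two_pi n

lemma integral_sin_mul_of_mem_zmultiples {T m : ℝ} (hT : T ≠ 0)
    (hm : m ∈ AddSubgroup.zmultiples (2 * π / T)) : ∫ θ in 0..T, sin (m * θ) = 0 := by
  rcases eq_or_ne m 0 with rfl | hm0
  · simp
  · rw [integral_sin_mul_of_ne_zero hm0, cos_mul_eq_one_of_mem_zmultiples hT hm, sub_self, zero_div]

lemma integral_cos_mul_of_mem_zmultiples {T m : ℝ} (hT : T ≠ 0)
    (hm : m ∈ AddSubgroup.zmultiples (2 * π / T)) :
    ∫ θ in 0..T, cos (m * θ) = if m = 0 then T else 0 := by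
  split_ifs with hm0
  · simp [hm0]
  · rw [integral_cos_mul_of_ne_zero hm0, sin_mul_eq_zero_of_mem_zmultiples hT hm, zero_div]

noncomputable def avgIterIntegral (T : ℝ) (u v : ℝ → ℝ) : ℝ :=
  (1 / T) * ∫ θ in 0..T, v θ * ∫ τ in 0..θ, u τ

lemma avgCoeff_eq_avgIterIntegral (k : ℕ) (i j : Fin 4) :
    avgCoeff k i j = avgIterIntegral (2 * π * k) (dither k i) (dither k j) := rfl

lemma avgIterIntegral_mul_add_mul_left {T : ℝ} {u u' v : ℝ → ℝ} (hu : Continuous u)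
    (hu' : Continuous u') (hv : Continuous v) (a b : ℝ) :
    avgIterIntegral T (fun θ => a * u θ + b * u' θ) v
      = a * avgIterIntegral T u v + b * avgIterIntegral T u' v := by
  have hU : Continuous fun θ => ∫ τ in 0..θ, u τ :=
    continuous_primitive (fun _ _ => hu.intervalIntegrable _ _) 0
  have hU' : Continuous fun θ => ∫ τ in 0..θ, u' τ :=
    continuous_primitive (fun _ _ => hu'.intervalIntegrable _ _) 0
  have hprim (θ : ℝ) : ∫ τ in 0..θ, (a * u τ + b * u' τ)
      = (a * ∫ τ in 0..θ, u τ) + b * ∫ τ in 0..θ, u' τ := by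
    rw [integral_add, integral_const_mul, integral_const_mul]
    all_goals exact Continuous.intervalIntegrable (by fun_prop) _ _
  simp only [avgIterIntegral, hprim, mul_add, mul_left_comm _ a, mul_left_comm _ b]
  rw [integral_add, integral_const_mul, integral_const_mul]
  · ring
  all_goals exact Continuous.intervalIntegrable (by fun_prop) _ _

lemma avgIterIntegral_mul_add_mul_right {T : ℝ} {u v v' : ℝ → ℝ} (hu : Continuous u)
    (hv : Continuous v) (hv' : Continuous v') (c d : ℝ) :
    avgIterIntegral T u (fun θ => c * v θ + d * v' θ)
      = c * avgIterIntegral T u v + d * avgIterIntegral T u v' := by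
  have hU : Continuous fun θ => ∫ τ in 0..θ, u τ :=
    continuous_primitive (fun _ _ => hu.intervalIntegrable _ _) 0
  simp only [avgIterIntegral, add_mul, mul_assoc]
  rw [integral_add, integral_const_mul, integral_const_mul]
  · ring
  all_goals exact Continuous.intervalIntegrable (by fun_prop) _ _

section Tones

variable {T a b : ℝ}

lemma avgIterIntegral_cos_cos (hT : T ≠ 0) (ha : a ∈ AddSubgroup.zmultiples (2 * π / T))
    (hb : b ∈ AddSubgroup.zmultiples (2 * π / T)) (ha0 : a ≠ 0) :
    avgIterIntegral T (fun θ => cos (a * θ)) (fun θ => cos (b * θ)) = 0 := by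
  have h (θ : ℝ) : cos (b * θ) * (sin (a * θ) / a)
      = (2 * a)⁻¹ * (sin ((a - b) * θ) + sin ((a + b) * θ)) := by
    rw [sub_mul, add_mul, ← two_mul_sin_mul_cos]; field_simp
  simp only [avgIterIntegral, integral_cos_mul_of_ne_zero ha0, h]
  rw [integral_const_mul, integral_add, integral_sin_mul_of_mem_zmultiples hT (sub_mem ha hb),
    integral_sin_mul_of_mem_zmultiples hT (add_mem ha hb)]
  · simp
  all_goals exact Continuous.intervalIntegrable (by fun_prop) _ _

lemma avgIterIntegral_sin_sin (hT : T ≠ 0) (ha : a ∈ AddSubgroup.zmultiples (2 * π / T))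
    (hb : b ∈ AddSubgroup.zmultiples (2 * π / T)) (ha0 : a ≠ 0) :
    avgIterIntegral T (fun θ => sin (a * θ)) (fun θ => sin (b * θ)) = 0 := by
  have h (θ : ℝ) : sin (b * θ) * ((1 - cos (a * θ)) / a)
      = a⁻¹ * sin (b * θ) - (2 * a)⁻¹ * (sin ((b - a) * θ) + sin ((b + a) * θ)) := by
    rw [sub_mul, add_mul, ← two_mul_sin_mul_cos]; field_simp
  simp only [avgIterIntegral, integral_sin_mul_of_ne_zero ha0, h]
  rw [integral_sub, integral_const_mul, integral_const_mul, integral_add,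
    integral_sin_mul_of_mem_zmultiples hT hb, integral_sin_mul_of_mem_zmultiples hT (sub_mem hb ha),
    integral_sin_mul_of_mem_zmultiples hT (add_mem hb ha)]
  · simp
  all_goals exact Continuous.intervalIntegrable (by fun_prop) _ _

lemma avgIterIntegral_cos_sin (hT : T ≠ 0) (ha : a ∈ AddSubgroup.zmultiples (2 * π / T))
    (hb : b ∈ AddSubgroup.zmultiples (2 * π / T)) (ha0 : a ≠ 0) (hab : a + b ≠ 0) :
    avgIterIntegral T (fun θ => cos (a * θ)) (fun θ => sin (b * θ))
      = if a = b then (2 * a)⁻¹ else 0 := by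
  have h (θ : ℝ) : sin (b * θ) * (sin (a * θ) / a)
      = (2 * a)⁻¹ * (cos ((a - b) * θ) - cos ((a + b) * θ)) := by
    rw [sub_mul, add_mul, ← two_mul_sin_mul_sin]; field_simp
  simp only [avgIterIntegral, integral_cos_mul_of_ne_zero ha0, h]
  rw [integral_const_mul, integral_sub, integral_cos_mul_of_mem_zmultiples hT (sub_mem ha hb),
    integral_cos_mul_of_mem_zmultiples hT (add_mem ha hb)]
  · simp only [sub_eq_zero, hab, if_false, sub_zero]
    split_ifs
    · field_simp
    · simp
  all_goals exact Continuous.intervalIntegrable (by fun_prop) _ _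

lemma avgIterIntegral_sin_cos (hT : T ≠ 0) (ha : a ∈ AddSubgroup.zmultiples (2 * π / T))
    (hb : b ∈ AddSubgroup.zmultiples (2 * π / T)) (ha0 : a ≠ 0) (hb0 : b ≠ 0) (hab : a + b ≠ 0) :
    avgIterIntegral T (fun θ => sin (a * θ)) (fun θ => cos (b * θ))
      = if a = b then -(2 * a)⁻¹ else 0 := by
  have h (θ : ℝ) : cos (b * θ) * ((1 - cos (a * θ)) / a)
      = a⁻¹ * cos (b * θ) - (2 * a)⁻¹ * (cos ((a - b) * θ) + cos ((a + b) * θ)) := by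
    rw [sub_mul, add_mul, ← two_mul_cos_mul_cos]; field_simp
  simp only [avgIterIntegral, integral_sin_mul_of_ne_zero ha0, h]
  rw [integral_sub, integral_const_mul, integral_const_mul, integral_add,
    integral_cos_mul_of_mem_zmultiples hT hb, integral_cos_mul_of_mem_zmultiples hT (sub_mem ha hb),
    integral_cos_mul_of_mem_zmultiples hT (add_mem ha hb)]
  · simp only [sub_eq_zero, hab, hb0, if_false, add_zero, mul_zero, zero_sub]
    split_ifs
    · field_simp
    · simp
  all_goals exact Continuous.intervalIntegrable (by fun_prop) _ _

end Tones

section TwoTones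

variable {T p q : ℝ}

lemma avgIterIntegral_cos_add_cos_sin_add_sin (hT : T ≠ 0)
    (hp : p ∈ AddSubgroup.zmultiples (2 * π / T)) (hq : q ∈ AddSubgroup.zmultiples (2 * π / T))
    (hp0 : 0 < p) (hq0 : 0 < q) (hpq : p ≠ q) :
    avgIterIntegral T (fun θ => 2⁻¹ * cos (p * θ) + 2⁻¹ * cos (q * θ))
      (fun θ => 2⁻¹ * sin (p * θ) + 2⁻¹ * sin (q * θ)) = (p + q) / (8 * p * q) := by
  rw [avgIterIntegral_mul_add_mul_left, avgIterIntegral_mul_add_mul_right,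
    avgIterIntegral_mul_add_mul_right,
    avgIterIntegral_cos_sin hT hp hp hp0.ne' (by positivity),
    avgIterIntegral_cos_sin hT hp hq hp0.ne' (by positivity),
    avgIterIntegral_cos_sin hT hq hp hq0.ne' (by positivity),
    avgIterIntegral_cos_sin hT hq hq hq0.ne' (by positivity)]
  · simp only [if_neg hpq, if_neg hpq.symm, ↓reduceIte]
    field_simp
    ring
  all_goals fun_prop

lemma avgIterIntegral_cos_add_cos_cos_sub_cos (hT : T ≠ 0)
    (hp : p ∈ AddSubgroup.zmultiples (2 * π / T)) (hq : q ∈ AddSubgroup.zmultiples (2 * π / T))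
    (hp0 : p ≠ 0) (hq0 : q ≠ 0) :
    avgIterIntegral T (fun θ => 2⁻¹ * cos (p * θ) + 2⁻¹ * cos (q * θ))
      (fun θ => -2⁻¹ * cos (p * θ) + 2⁻¹ * cos (q * θ)) = 0 := by
  rw [avgIterIntegral_mul_add_mul_left, avgIterIntegral_mul_add_mul_right,
    avgIterIntegral_mul_add_mul_right,
    avgIterIntegral_cos_cos hT hp hp hp0, avgIterIntegral_cos_cos hT hp hq hp0,
    avgIterIntegral_cos_cos hT hq hp hq0, avgIterIntegral_cos_cos hT hq hq hq0]
  · ring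
  all_goals fun_prop

lemma avgIterIntegral_sin_add_sin_sin_sub_sin (hT : T ≠ 0)
    (hp : p ∈ AddSubgroup.zmultiples (2 * π / T)) (hq : q ∈ AddSubgroup.zmultiples (2 * π / T))
    (hp0 : p ≠ 0) (hq0 : q ≠ 0) :
    avgIterIntegral T (fun θ => 2⁻¹ * sin (p * θ) + 2⁻¹ * sin (q * θ))
      (fun θ => 2⁻¹ * sin (p * θ) + -2⁻¹ * sin (q * θ)) = 0 := by
  rw [avgIterIntegral_mul_add_mul_left, avgIterIntegral_mul_add_mul_right,
    avgIterIntegral_mul_add_mul_right,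
    avgIterIntegral_sin_sin hT hp hp hp0, avgIterIntegral_sin_sin hT hp hq hp0,
    avgIterIntegral_sin_sin hT hq hp hq0, avgIterIntegral_sin_sin hT hq hq hq0]
  · ring
  all_goals fun_prop

lemma avgIterIntegral_sin_sub_sin_cos_sub_cos (hT : T ≠ 0)
    (hp : p ∈ AddSubgroup.zmultiples (2 * π / T)) (hq : q ∈ AddSubgroup.zmultiples (2 * π / T))
    (hp0 : 0 < p) (hq0 : 0 < q) (hpq : p ≠ q) :
    avgIterIntegral T (fun θ => 2⁻¹ * sin (p * θ) + -2⁻¹ * sin (q * θ))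
      (fun θ => -2⁻¹ * cos (p * θ) + 2⁻¹ * cos (q * θ)) = (p + q) / (8 * p * q) := by
  rw [avgIterIntegral_mul_add_mul_left, avgIterIntegral_mul_add_mul_right,
    avgIterIntegral_mul_add_mul_right,
    avgIterIntegral_sin_cos hT hp hp hp0.ne' hp0.ne' (by positivity),
    avgIterIntegral_sin_cos hT hp hq hp0.ne' hq0.ne' (by positivity),
    avgIterIntegral_sin_cos hT hq hp hq0.ne' hp0.ne' (by positivity),
    avgIterIntegral_sin_cos hT hq hq hq0.ne' hq0.ne' (by positivity)]
  · simp only [if_neg hpq, if_neg hpq.symm, ↓reduceIte]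
    field_simp
    ring
  all_goals fun_prop

end TwoTones

section Dither

variable (k : ℕ)

lemma dither_zero_eq : dither k 0 =
    fun θ => 2⁻¹ * cos ((1 + (k : ℝ)⁻¹) * θ) + 2⁻¹ * cos ((1 - (k : ℝ)⁻¹) * θ) := by
  funext θ
  rw [show (1 + (k : ℝ)⁻¹) * θ = θ + θ / k by ring, show (1 - (k : ℝ)⁻¹) * θ = θ - θ / k by ring]
  simp only [dither, cos_add, cos_sub]
  ring

lemma dither_one_eq : dither k 1 =
    fun θ => 2⁻¹ * sin ((1 + (k : ℝ)⁻¹) * θ) + 2⁻¹ * sin ((1 - (k : ℝ)⁻¹) * θ) := by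
  funext θ
  rw [show (1 + (k : ℝ)⁻¹) * θ = θ + θ / k by ring, show (1 - (k : ℝ)⁻¹) * θ = θ - θ / k by ring]
  simp only [dither, sin_add, sin_sub]
  ring

lemma dither_two_eq : dither k 2 =
    fun θ => 2⁻¹ * sin ((1 + (k : ℝ)⁻¹) * θ) + -2⁻¹ * sin ((1 - (k : ℝ)⁻¹) * θ) := by
  funext θ
  rw [show (1 + (k : ℝ)⁻¹) * θ = θ + θ / k by ring, show (1 - (k : ℝ)⁻¹) * θ = θ - θ / k by ring]
  simp only [dither, sin_add, sin_sub]
  ring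

lemma dither_three_eq : dither k 3 =
    fun θ => -2⁻¹ * cos ((1 + (k : ℝ)⁻¹) * θ) + 2⁻¹ * cos ((1 - (k : ℝ)⁻¹) * θ) := by
  funext θ
  rw [show (1 + (k : ℝ)⁻¹) * θ = θ + θ / k by ring, show (1 - (k : ℝ)⁻¹) * θ = θ - θ / k by ring]
  simp only [dither, cos_add, cos_sub]
  ring

end Dither

lemma one_add_inv_mem_zmultiples {k : ℕ} (hk : k ≠ 0) :
    1 + (k : ℝ)⁻¹ ∈ AddSubgroup.zmultiples (2 * π / (2 * π * k)) := by
  refine AddSubgroup.mem_zmultiples_iff.mpr ⟨k + 1, ?_⟩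
  rw [zsmul_eq_mul]
  push_cast
  field_simp

lemma one_sub_inv_mem_zmultiples {k : ℕ} (hk : k ≠ 0) :
    1 - (k : ℝ)⁻¹ ∈ AddSubgroup.zmultiples (2 * π / (2 * π * k)) := by
  refine AddSubgroup.mem_zmultiples_iff.mpr ⟨k - 1, ?_⟩
  rw [zsmul_eq_mul]
  push_cast
  field_simp

lemma one_add_add_one_sub_div (r : ℝ) :
    ((1 + r) + (1 - r)) / (8 * (1 + r) * (1 - r)) = (4 * (1 - r ^ 2))⁻¹ := by
  rw [show (1 + r) + (1 - r) = 2 by ring,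
    show 8 * (1 + r) * (1 - r) = 2 * (4 * (1 - r ^ 2)) by ring, div_mul_cancel_left₀ two_ne_zero]

section AvgCoeff

variable {k : ℕ}

lemma avgCoeff_zero_one (hk : 1 < k) : avgCoeff k 0 1 = (4 * (1 - (k : ℝ)⁻¹ ^ 2))⁻¹ := by
  have hk' : (1 : ℝ) < k := by exact_mod_cast hk
  have hinv : 0 < (k : ℝ)⁻¹ := by positivity
  rw [avgCoeff_eq_avgIterIntegral]
  rw [dither_zero_eq, dither_one_eq, avgIterIntegral_cos_add_cos_sin_add_sin (by positivity)
    (one_add_inv_mem_zmultiples (by omega)) (one_sub_inv_mem_zmultiples (by omega)) (by positivity)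
    (sub_pos.2 (inv_lt_one_of_one_lt₀ hk')) (by linarith), one_add_add_one_sub_div]

lemma avgCoeff_two_three (hk : 1 < k) : avgCoeff k 2 3 = (4 * (1 - (k : ℝ)⁻¹ ^ 2))⁻¹ := by
  have hk' : (1 : ℝ) < k := by exact_mod_cast hk
  have hinv : 0 < (k : ℝ)⁻¹ := by positivity
  rw [avgCoeff_eq_avgIterIntegral]
  rw [dither_two_eq, dither_three_eq, avgIterIntegral_sin_sub_sin_cos_sub_cos (by positivity)
    (one_add_inv_mem_zmultiples (by omega)) (one_sub_inv_mem_zmultiples (by omega)) (by positivity)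
    (sub_pos.2 (inv_lt_one_of_one_lt₀ hk')) (by linarith), one_add_add_one_sub_div]

lemma avgCoeff_zero_three (hk : 1 < k) : avgCoeff k 0 3 = 0 := by
  have hk' : (1 : ℝ) < k := by exact_mod_cast hk
  rw [avgCoeff_eq_avgIterIntegral]
  rw [dither_zero_eq, dither_three_eq]
  exact avgIterIntegral_cos_add_cos_cos_sub_cos (by positivity)
    (one_add_inv_mem_zmultiples (by omega)) (one_sub_inv_mem_zmultiples (by omega)) (by positivity)
    (sub_ne_zero.2 (inv_lt_one_of_one_lt₀ hk').ne')

lemma avgCoeff_one_two (hk : 1 < k) : avgCoeff k 1 2 = 0 := by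
  have hk' : (1 : ℝ) < k := by exact_mod_cast hk
  rw [avgCoeff_eq_avgIterIntegral]
  rw [dither_one_eq, dither_two_eq]
  exact avgIterIntegral_sin_add_sin_sin_sub_sin (by positivity)
    (one_add_inv_mem_zmultiples (by omega)) (one_sub_inv_mem_zmultiples (by omega)) (by positivity)
    (sub_ne_zero.2 (inv_lt_one_of_one_lt₀ hk').ne')

end AvgCoeff

lemma dot2_grad2 (J : ℝ × ℝ → ℝ) (x v : ℝ × ℝ) : dot2 v (grad2 J x) = fderiv ℝ J x v := by
  conv_rhs => rw [show v = v.1 • ((1 : ℝ), (0 : ℝ)) + v.2 • ((0 : ℝ), (1 : ℝ)) by ext <;> simp]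
  rw [map_add, map_smul, map_smul, smul_eq_mul, smul_eq_mul, dot2, grad2]

section LieBracket

variable {J : ℝ × ℝ → ℝ} {J' : ℝ × ℝ →L[ℝ] ℝ} {x : ℝ × ℝ}

lemma lieBracket_comp_smul {φ ψ : ℝ → ℝ} {φ' ψ' : ℝ} (hJ : HasFDerivAt J J' x)
    (hφ : HasDerivAt φ φ' (J x)) (hψ : HasDerivAt ψ ψ' (J x)) (v w : ℝ × ℝ) :
    lieBracket (fun y => φ (J y) • v) (fun y => ψ (J y) • w) x
      = (φ (J x) * ψ' * J' v) • w - (φ' * ψ (J x) * J' w) • v := by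
  have hψJ : HasFDerivAt (fun y => ψ (J y)) (ψ' • J') x := hψ.comp_hasFDerivAt x hJ
  have hφJ : HasFDerivAt (fun y => φ (J y)) (φ' • J') x := hφ.comp_hasFDerivAt x hJ
  rw [lieBracket, (hψJ.smul_const w).fderiv, (hφJ.smul_const v).fderiv]
  simp only [ContinuousLinearMap.smulRight_apply, smul_apply, map_smul, smul_eq_mul]
  module

lemma HasFDerivAt.apply_lieBracket_comp_smul {φ ψ : ℝ → ℝ} {φ' ψ' : ℝ} (hJ : HasFDerivAt J J' x)
    (hφ : HasDerivAt φ φ' (J x)) (hψ : HasDerivAt ψ ψ' (J x)) (v w : ℝ × ℝ) :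
    J' (lieBracket (fun y => φ (J y) • v) (fun y => ψ (J y) • w) x)
      = (φ (J x) * ψ' - φ' * ψ (J x)) * J' v * J' w := by
  rw [lieBracket_comp_smul hJ hφ hψ, map_sub, map_smul, map_smul, smul_eq_mul, smul_eq_mul]
  ring

end LieBracket

lemma esVF_eq (c : ℝ) (F1 F2 : ℝ → ℝ) (J : ℝ × ℝ → ℝ) (i : Fin 4) :
    esVF c F1 F2 J i = fun y => (√c * ![F1, F2, F1, F2] i (J y)) •
      ![((1 : ℝ), (0 : ℝ)), (1, 0), (0, 1), (0, 1)] i := by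
  fin_cases i <;> funext y <;> simp [esVF]

lemma HasFDerivAt.apply_lieBracket_esVF {c : ℝ} (hc : 0 ≤ c) {J : ℝ × ℝ → ℝ}
    {J' : ℝ × ℝ →L[ℝ] ℝ} {x : ℝ × ℝ} (hJ : HasFDerivAt J J' x) {F1 F2 : ℝ → ℝ}
    (hF1 : Differentiable ℝ F1) (hF2 : Differentiable ℝ F2) (i j : Fin 4) :
    J' (lieBracket (esVF c F1 F2 J i) (esVF c F1 F2 J j) x)
      = c * (![F1, F2, F1, F2] i (J x) * deriv (![F1, F2, F1, F2] j) (J x)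
          - deriv (![F1, F2, F1, F2] i) (J x) * ![F1, F2, F1, F2] j (J x))
        * J' (![((1 : ℝ), (0 : ℝ)), (1, 0), (0, 1), (0, 1)] i)
        * J' (![((1 : ℝ), (0 : ℝ)), (1, 0), (0, 1), (0, 1)] j) := by
  have hF (l : Fin 4) : Differentiable ℝ (![F1, F2, F1, F2] l) := by
    fin_cases l <;> assumption
  rw [esVF_eq, esVF_eq, hJ.apply_lieBracket_comp_smul ((hF i _).hasDerivAt.const_mul √c)
    ((hF j _).hasDerivAt.const_mul √c)]
  ring_nf
  rw [Real.sq_sqrt hc]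
  ring

/-- The right-hand side G of the Lie bracket system satisfies
⟨G(x), ∇Ĵ(x)⟩ = −ϑ‖∇Ĵ(x)‖² for every x, i.e. G deviates from −ϑ∇Ĵ only by
a term pointwise orthogonal to ∇Ĵ. -/
theorem stmt1 (k : ℕ) (hk : 1 < k) (ϑ α : ℝ) (hϑ : 0 < ϑ)
    (hα : α = 4 * (1 - ((k : ℝ) ^ 2)⁻¹))
    (J : ℝ × ℝ → ℝ) (hJ : ContDiff ℝ 2 J)
    (F1 F2 : ℝ → ℝ) (hF1 : Differentiable ℝ F1) (hF2 : Differentiable ℝ F2)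
    (hW : ∀ z : ℝ, F1 z * deriv F2 z - deriv F1 z * F2 z = -1) (x : ℝ × ℝ) :
    dot2 (∑ p ∈ Finset.univ.filter (fun p : Fin 4 × Fin 4 => p.1 < p.2),
        avgCoeff k p.1 p.2 •
          lieBracket (esVF (ϑ * α) F1 F2 J p.1) (esVF (ϑ * α) F1 F2 J p.2) x)
      (grad2 J x)
      = -ϑ * dot2 (grad2 J x) (grad2 J x) := by
  have hα0 : 0 < α := by
    have : ((k : ℝ) ^ 2)⁻¹ < 1 := inv_lt_one_of_one_lt₀ (by norm_cast; nlinarith)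
    linarith
  have hν : α * avgCoeff k 0 1 = 1 := by
    rw [avgCoeff_zero_one hk, inv_pow, ← hα, mul_inv_cancel₀ hα0.ne']
  have hc : 0 ≤ ϑ * α := by positivity
  have hJx : HasFDerivAt J (fderiv ℝ J x) x := (hJ.differentiable (by norm_num) x).hasFDerivAt
  rw [dot2_grad2, map_sum]
  simp only [map_smul, smul_eq_mul, hJx.apply_lieBracket_esVF hc hF1 hF2]
  simp only [Finset.sum_filter, Fintype.sum_prod_type, Fin.sum_univ_four, Fin.reduceLT, ↓reduceIte,
    Matrix.cons_val, zero_add, add_zero]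
  rw [avgCoeff_zero_three hk, avgCoeff_one_two hk, avgCoeff_two_three hk, ← avgCoeff_zero_one hk,
    dot2, grad2]
  linear_combination (ϑ * α * avgCoeff k 0 1 * (fderiv ℝ J x (1, 0) ^ 2 + fderiv ℝ J x (0, 1) ^ 2))
    * hW (J x) - ϑ * (fderiv ℝ J x (1, 0) ^ 2 + fderiv ℝ J x (0, 1) ^ 2) * hν
end

section
/- For every integer k ≥ 2, ∫₀^{2πk} sin θ · cos(θ/k) · (∫₀^θ cos τ · cos(τ/k) dτ) dθ = π k³ / (2(k² − 1)). Equivalently, (1/(2πk)) times this iterated integral equals 1/α with α = 4(1 − k⁻²). -/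
/-!
With `a = 1 + 1/k` and `b = 1 - 1/k`, product-to-sum gives
`cos τ cos (τ/k) = (cos bτ + cos aτ)/2`, so the inner integral is
`(sin bθ / b + sin aθ / a)/2`, and `sin θ cos (θ/k) = (sin bθ + sin aθ)/2`.
On `[0, 2πk]` the frequencies `b` and `a` run through `k - 1` and `k + 1` full periods, so by
orthogonality the cross term `sin aθ sin bθ` integrates to `0` and each square to `πk`, leaving
`πk (1/a + 1/b)/4 = πk³/(2(k² - 1))`.
-/

open Real intervalIntegral

theorem intervalIntegrable_cos_const_mul (c a b : ℝ) :
    IntervalIntegrable (fun x => cos (c * x)) MeasureTheory.volume a b :=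
  (continuous_cos.comp (continuous_const_mul c)).intervalIntegrable a b

theorem integral_cos_const_mul (c T : ℝ) (hc : c ≠ 0) :
    ∫ x in (0:ℝ)..T, cos (c * x) = sin (c * T) / c := by
  rw [integral_comp_mul_left (fun x => cos x) hc, integral_cos, mul_zero, sin_zero, sub_zero,
    smul_eq_mul, inv_mul_eq_div]

theorem integral_cos_mul_mul_cos_mul (p q T : ℝ) (h₁ : p - q ≠ 0) (h₂ : p + q ≠ 0) :
    ∫ x in (0:ℝ)..T, cos (p * x) * cos (q * x)
      = (sin ((p - q) * T) / (p - q) + sin ((p + q) * T) / (p + q)) / 2 := by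
  have h x : cos (p * x) * cos (q * x) = (cos ((p - q) * x) + cos ((p + q) * x)) / 2 := by
    rw [sub_mul, add_mul, ← two_mul_cos_mul_cos]; ring
  simp_rw [h]
  rw [integral_div, integral_add (intervalIntegrable_cos_const_mul _ _ _)
    (intervalIntegrable_cos_const_mul _ _ _), integral_cos_const_mul _ _ h₁,
    integral_cos_const_mul _ _ h₂]

theorem integral_sin_mul_mul_sin_mul (p q T : ℝ) (h₁ : p - q ≠ 0) (h₂ : p + q ≠ 0) :
    ∫ x in (0:ℝ)..T, sin (p * x) * sin (q * x)
      = (sin ((p - q) * T) / (p - q) - sin ((p + q) * T) / (p + q)) / 2 := by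
  have h x : sin (p * x) * sin (q * x) = (cos ((p - q) * x) - cos ((p + q) * x)) / 2 := by
    rw [sub_mul, add_mul, ← two_mul_sin_mul_sin]; ring
  simp_rw [h]
  rw [integral_div, integral_sub (intervalIntegrable_cos_const_mul _ _ _)
    (intervalIntegrable_cos_const_mul _ _ _), integral_cos_const_mul _ _ h₁,
    integral_cos_const_mul _ _ h₂]

theorem integral_sin_mul_mul_self (p T : ℝ) (hp : p ≠ 0) :
    ∫ x in (0:ℝ)..T, sin (p * x) * sin (p * x) = (T - sin (2 * p * T) / (2 * p)) / 2 := by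
  have h x : sin (p * x) * sin (p * x) = (1 - cos (2 * p * x)) / 2 := by
    rw [mul_assoc 2 p x, cos_two_mul, cos_sq']; ring
  simp_rw [h]
  rw [integral_div, integral_sub intervalIntegrable_const (intervalIntegrable_cos_const_mul _ _ _),
    integral_cos_const_mul _ _ (by positivity), integral_one, sub_zero]

theorem sin_eq_zero_of_eq_two_pi_mul_int {x : ℝ} {m : ℤ} (h : x = 2 * π * m) :
    sin x = 0 := by
  rw [h, show 2 * π * m = ((2 * m : ℤ) : ℝ) * π by push_cast; ring, sin_int_mul_pi]

theorem integral_sin_mul_mul_sin_mul_eq_zero {p q T : ℝ} {m n : ℤ} (hp : p * T = 2 * π * m)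
    (hq : q * T = 2 * π * n) (hsub : m ≠ n) (hadd : m + n ≠ 0) :
    ∫ x in (0:ℝ)..T, sin (p * x) * sin (q * x) = 0 := by
  have hsubT : (p - q) * T = 2 * π * ((m - n : ℤ) : ℝ) := by
    push_cast; linear_combination hp - hq
  have haddT : (p + q) * T = 2 * π * ((m + n : ℤ) : ℝ) := by
    push_cast; linear_combination hp + hq
  have hne {r : ℝ} {j : ℤ} (hr : r * T = 2 * π * j) (hj : j ≠ 0) : r ≠ 0 := by
    rintro rfl
    have : (2 * π) * (j : ℝ) = 0 := by rw [← hr, zero_mul]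
    simp [pi_ne_zero, hj] at this
  rw [integral_sin_mul_mul_sin_mul p q T (hne hsubT (sub_ne_zero.mpr hsub)) (hne haddT hadd),
    sin_eq_zero_of_eq_two_pi_mul_int hsubT, sin_eq_zero_of_eq_two_pi_mul_int haddT]
  simp

theorem integral_sin_mul_mul_self_eq_half {p T : ℝ} {m : ℤ} (hp0 : p ≠ 0)
    (hp : p * T = 2 * π * m) :
    ∫ x in (0:ℝ)..T, sin (p * x) * sin (p * x) = T / 2 := by
  have h2 : 2 * p * T = 2 * π * ((2 * m : ℤ) : ℝ) := by push_cast; linear_combination 2 * hp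
  rw [integral_sin_mul_mul_self p T hp0, sin_eq_zero_of_eq_two_pi_mul_int h2]
  simp

theorem integral_cos_mul_cos_div (K θ : ℝ) (hb : 1 - K⁻¹ ≠ 0) (ha : 1 + K⁻¹ ≠ 0) :
    ∫ τ in (0:ℝ)..θ, cos τ * cos (τ / K)
      = (sin ((1 - K⁻¹) * θ) / (1 - K⁻¹) + sin ((1 + K⁻¹) * θ) / (1 + K⁻¹)) / 2 := by
  simpa only [one_mul, inv_mul_eq_div] using integral_cos_mul_mul_cos_mul 1 K⁻¹ θ hb ha

theorem sin_mul_cos_div_mul_integral_cos_mul_cos_div (K θ : ℝ) (hb : 1 - K⁻¹ ≠ 0)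
    (ha : 1 + K⁻¹ ≠ 0) :
    sin θ * cos (θ / K) * ∫ τ in (0:ℝ)..θ, cos τ * cos (τ / K)
      = (sin ((1 - K⁻¹) * θ) * sin ((1 - K⁻¹) * θ) / (1 - K⁻¹)
        + sin ((1 + K⁻¹) * θ) * sin ((1 + K⁻¹) * θ) / (1 + K⁻¹)
        + (1 / (1 - K⁻¹) + 1 / (1 + K⁻¹))
          * (sin ((1 - K⁻¹) * θ) * sin ((1 + K⁻¹) * θ))) / 4 := by
  have hprod : sin θ * cos (θ / K) = (sin ((1 - K⁻¹) * θ) + sin ((1 + K⁻¹) * θ)) / 2 := by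
    rw [sub_mul, add_mul, one_mul, inv_mul_eq_div, ← two_mul_sin_mul_cos]; ring
  rw [integral_cos_mul_cos_div K θ hb ha, hprod]
  field_simp
  ring

theorem integral_sin_mul_cos_div_mul_integral_cos_mul_cos_div (k : ℕ) (hk : 2 ≤ k) :
    (∫ θ in (0:ℝ)..(2 * π * k),
        sin θ * cos (θ / k) * ∫ τ in (0:ℝ)..θ, cos τ * cos (τ / k))
      = π * (k : ℝ) ^ 3 / (2 * ((k : ℝ) ^ 2 - 1)) := by
  have hk' : (2 : ℝ) ≤ k := by exact_mod_cast hk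
  have hb : 1 - (k : ℝ)⁻¹ ≠ 0 := by
    have : (k : ℝ)⁻¹ < 1 := inv_lt_one_of_one_lt₀ (by linarith)
    linarith
  have ha : 1 + (k : ℝ)⁻¹ ≠ 0 := by positivity
  have hbT : (1 - (k : ℝ)⁻¹) * (2 * π * k) = 2 * π * ((k - 1 : ℤ) : ℝ) := by
    push_cast; field_simp
  have haT : (1 + (k : ℝ)⁻¹) * (2 * π * k) = 2 * π * ((k + 1 : ℤ) : ℝ) := by
    push_cast; field_simp
  have hcont (p q : ℝ) :
      IntervalIntegrable (fun θ => sin (p * θ) * sin (q * θ)) MeasureTheory.volume 0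
        (2 * π * k) :=
    Continuous.intervalIntegrable (by fun_prop) _ _
  simp_rw [sin_mul_cos_div_mul_integral_cos_mul_cos_div _ _ hb ha]
  rw [integral_div,
    integral_add (((hcont _ _).div_const _).add ((hcont _ _).div_const _))
      ((hcont _ _).const_mul _),
    integral_add ((hcont _ _).div_const _) ((hcont _ _).div_const _), integral_div, integral_div,
    integral_const_mul, integral_sin_mul_mul_self_eq_half hb hbT,
    integral_sin_mul_mul_self_eq_half ha haT,
    integral_sin_mul_mul_sin_mul_eq_zero hbT haT (by omega) (by omega)]
  have : (k : ℝ) - 1 ≠ 0 := by linarith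
  have : (k : ℝ) ^ 2 - 1 ≠ 0 := by nlinarith
  field_simp
  ring

/-- Averaging coefficient ν₁₂: for every integer k ≥ 2,
∫₀^{2πk} sin θ · cos(θ/k) · (∫₀^θ cos τ · cos(τ/k) dτ) dθ = πk³/(2(k²−1));
equivalently, (1/(2πk)) times this iterated integral equals 1/α with α = 4(1 − k⁻²). -/
theorem stmt5 (k : ℕ) (hk : 2 ≤ k) :
    (∫ θ in (0:ℝ)..(2 * Real.pi * k),
        Real.sin θ * Real.cos (θ / k) * ∫ τ in (0:ℝ)..θ, Real.cos τ * Real.cos (τ / k))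
      = Real.pi * (k : ℝ) ^ 3 / (2 * ((k : ℝ) ^ 2 - 1)) ∧
    (1 / (2 * Real.pi * k)) *
      (∫ θ in (0:ℝ)..(2 * Real.pi * k),
        Real.sin θ * Real.cos (θ / k) * ∫ τ in (0:ℝ)..θ, Real.cos τ * Real.cos (τ / k))
      = 1 / (4 * (1 - ((k : ℝ) ^ 2)⁻¹)) := by
  have hν := integral_sin_mul_cos_div_mul_integral_cos_mul_cos_div k hk
  refine ⟨hν, ?_⟩
  have hk' : (2 : ℝ) ≤ k := by exact_mod_cast hk
  have : (k : ℝ) ^ 2 - 1 ≠ 0 := by nlinarith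
  rw [hν]
  field_simp
  ring
end

section
/- For every integer k ≥ 2, ∫₀^{2πk} sin θ · sin(θ/k) · (∫₀^θ cos τ · sin(τ/k) dτ) dθ = π k³ / (2(k² − 1)). Equivalently, (1/(2πk)) times this iterated integral equals 1/α with α = 4(1 − k⁻²). -/
/-!
With `a = 1 + 1/k` and `b = 1 - 1/k`, product-to-sum formulas give
`sin θ sin (θ/k) = (cos bθ - cos aθ)/2` and the inner integral
`(1 - cos aθ)/(2a) - (1 - cos bθ)/(2b)`. Over `[0, 2πk]` the frequencies `a`, `b` complete whole
numbers of turns, so `cos aθ`, `cos bθ` are orthogonal with mean `0` and mean square `1/2`;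
only the two squares survive, and the integral is `2πk (1/a + 1/b)/8 = 2πk / (4 (1 - k⁻²))`.
-/

open Real intervalIntegral

section Orthogonality

variable {α β T : ℝ}

lemma integral_cos_mul_of_mul_eq_int_mul_pi {m : ℤ} (hα : α ≠ 0) (h : α * T = m * π) :
    ∫ θ in (0:ℝ)..T, cos (α * θ) = 0 := by
  rw [integral_comp_mul_left cos hα, integral_cos, mul_zero, h, sin_int_mul_pi, sin_zero,
    sub_zero, smul_zero]

lemma integral_cos_mul_mul_cos_mul_of_ne {m n : ℤ} (hne : α ≠ β) (hne' : α + β ≠ 0)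
    (hα : α * T = m * π) (hβ : β * T = n * π) :
    ∫ θ in (0:ℝ)..T, cos (α * θ) * cos (β * θ) = 0 := by
  have hprod : ∀ θ, cos (α * θ) * cos (β * θ) =
      (cos ((α - β) * θ) + cos ((α + β) * θ)) / 2 := fun θ => by
    rw [sub_mul, add_mul, cos_sub, cos_add]; ring
  simp_rw [hprod]
  rw [integral_div, integral_add (by apply Continuous.intervalIntegrable; fun_prop)
      (by apply Continuous.intervalIntegrable; fun_prop),
    integral_cos_mul_of_mul_eq_int_mul_pi (m := m - n) (sub_ne_zero.2 hne) (by push_cast; linarith),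
    integral_cos_mul_of_mul_eq_int_mul_pi (m := m + n) hne' (by push_cast; linarith)]
  ring

lemma integral_cos_mul_sq {m : ℤ} (hα : α ≠ 0) (h : α * T = m * π) :
    ∫ θ in (0:ℝ)..T, cos (α * θ) ^ 2 = T / 2 := by
  have hsq : ∀ θ, cos (α * θ) ^ 2 = (1 + cos ((2 * α) * θ)) / 2 := fun θ => by
    rw [cos_sq, mul_assoc]; ring
  simp_rw [hsq]
  rw [integral_div, integral_add intervalIntegrable_const
      (by apply Continuous.intervalIntegrable; fun_prop),
    integral_cos_mul_of_mul_eq_int_mul_pi (m := 2 * m) (by positivity) (by push_cast; linarith)]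
  simp

end Orthogonality

lemma integral_sin_mul {α : ℝ} (hα : α ≠ 0) (θ : ℝ) :
    ∫ τ in (0:ℝ)..θ, sin (α * τ) = (1 - cos (α * θ)) / α := by
  rw [integral_comp_mul_left sin hα, integral_sin, mul_zero, cos_zero, smul_eq_mul]
  field_simp

lemma integral_cos_mul_sin_mul {ω : ℝ} (ha : 1 + ω ≠ 0) (hb : 1 - ω ≠ 0) (θ : ℝ) :
    ∫ τ in (0:ℝ)..θ, cos τ * sin (ω * τ) =
      (1 - cos ((1 + ω) * θ)) / (2 * (1 + ω)) - (1 - cos ((1 - ω) * θ)) / (2 * (1 - ω)) := by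
  have hprod : ∀ τ, cos τ * sin (ω * τ) = (sin ((1 + ω) * τ) - sin ((1 - ω) * τ)) / 2 :=
    fun τ => by rw [add_mul, sub_mul, one_mul, sin_add, sin_sub]; ring
  simp_rw [hprod]
  rw [integral_div, integral_sub (by apply Continuous.intervalIntegrable; fun_prop)
      (by apply Continuous.intervalIntegrable; fun_prop), integral_sin_mul ha,
    integral_sin_mul hb]
  field_simp

lemma sin_mul_sin_mul (ω θ : ℝ) :
    sin θ * sin (ω * θ) = (cos ((1 - ω) * θ) - cos ((1 + ω) * θ)) / 2 := by
  rw [add_mul, sub_mul, one_mul, cos_add, cos_sub]; ring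

lemma integral_sin_mul_sin_mul_mul_integral_cos_mul_sin_mul {ω T : ℝ} {m n : ℤ} (hω : ω ≠ 0)
    (ha : 1 + ω ≠ 0) (hb : 1 - ω ≠ 0) (hm : (1 + ω) * T = m * π) (hn : (1 - ω) * T = n * π) :
    ∫ θ in (0:ℝ)..T, sin θ * sin (ω * θ) * ∫ τ in (0:ℝ)..θ, cos τ * sin (ω * τ) =
      T / (4 * (1 - ω ^ 2)) := by
  have hexpand : ∀ θ, sin θ * sin (ω * θ) * ∫ τ in (0:ℝ)..θ, cos τ * sin (ω * τ) =
      (1 / (1 + ω) - 1 / (1 - ω)) / 4 * (cos ((1 - ω) * θ) - cos ((1 + ω) * θ))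
        + cos ((1 + ω) * θ) ^ 2 / (4 * (1 + ω)) + cos ((1 - ω) * θ) ^ 2 / (4 * (1 - ω))
        - (1 / (1 + ω) + 1 / (1 - ω)) / 4 * (cos ((1 + ω) * θ) * cos ((1 - ω) * θ)) :=
    fun θ => by rw [sin_mul_sin_mul, integral_cos_mul_sin_mul ha hb]; field_simp; ring
  have hint : ∀ {f : ℝ → ℝ}, Continuous f → IntervalIntegrable f MeasureTheory.volume 0 T :=
    fun hf => hf.intervalIntegrable _ _
  simp_rw [hexpand]
  rw [integral_sub (hint (by fun_prop)) (hint (by fun_prop)),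
    integral_add (hint (by fun_prop)) (hint (by fun_prop)),
    integral_add (hint (by fun_prop)) (hint (by fun_prop)),
    integral_const_mul, integral_const_mul, integral_div, integral_div,
    integral_sub (hint (by fun_prop)) (hint (by fun_prop)),
    integral_cos_mul_of_mul_eq_int_mul_pi ha hm, integral_cos_mul_of_mul_eq_int_mul_pi hb hn,
    integral_cos_mul_sq ha hm, integral_cos_mul_sq hb hn,
    integral_cos_mul_mul_cos_mul_of_ne (by contrapose! hω; linarith) (by norm_num) hm hn]
  have h1 : 1 - ω ^ 2 ≠ 0 := by
    rw [show 1 - ω ^ 2 = (1 + ω) * (1 - ω) by ring]; exact mul_ne_zero ha hb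
  field_simp
  ring

/-- Averaging coefficient ν₃₄: for every integer k ≥ 2,
∫₀^{2πk} sin θ · sin(θ/k) · (∫₀^θ cos τ · sin(τ/k) dτ) dθ = πk³/(2(k²−1));
equivalently, (1/(2πk)) times this iterated integral equals 1/α with α = 4(1 − k⁻²). -/
theorem stmt6 (k : ℕ) (hk : 2 ≤ k) :
    (∫ θ in (0:ℝ)..(2 * Real.pi * k),
        Real.sin θ * Real.sin (θ / k) * ∫ τ in (0:ℝ)..θ, Real.cos τ * Real.sin (τ / k))
      = Real.pi * (k : ℝ) ^ 3 / (2 * ((k : ℝ) ^ 2 - 1)) ∧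
    (1 / (2 * Real.pi * k)) *
      (∫ θ in (0:ℝ)..(2 * Real.pi * k),
        Real.sin θ * Real.sin (θ / k) * ∫ τ in (0:ℝ)..θ, Real.cos τ * Real.sin (τ / k))
      = 1 / (4 * (1 - ((k : ℝ) ^ 2)⁻¹)) := by
  have hk' : (2 : ℝ) ≤ k := by exact_mod_cast hk
  have hk0 : (k : ℝ) ≠ 0 := by positivity
  have hkinv : (k : ℝ)⁻¹ ≤ 1 / 2 := by rw [inv_le_comm₀] <;> linarith
  have hI := integral_sin_mul_sin_mul_mul_integral_cos_mul_sin_mul (T := 2 * π * k)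
    (m := 2 * k + 2) (n := 2 * k - 2) (inv_ne_zero hk0) (by positivity) (by linarith)
    (by push_cast; field_simp) (by push_cast; field_simp)
  simp only [← div_eq_inv_mul, inv_pow] at hI
  rw [hI]
  have hk2 : (k : ℝ) ^ 2 - 1 ≠ 0 := by nlinarith
  constructor
  · field_simp; norm_num
  · field_simp
end

section
/- Let κ > 0, ϑ > 0, ν > 0, let γ : [0,∞) → ℝ² be C¹ with ‖γ′(t)‖ ≤ ν for all t ≥ 0, and let Φ : ℝ² → ℝ² be a continuous map satisfying ⟨Φ(ξ), ξ⟩ = 0 for all ξ ∈ ℝ². Let x̄ : [t₀, ∞) → ℝ² be a differentiable solution of the Lie bracket system x̄′(t) = −2κϑ·(x̄(t) − γ(t)) + Φ(x̄(t) − γ(t)). Then: (a) at every time t where x̄(t) ≠ γ(t), the function r(t) = ‖x̄(t) − γ(t)‖ is differentiable and r′(t) ≤ −2κϑ·r(t) + ν; (b) consequently, if additionally ϑ ≥ ν/(2√(κλ)) for some λ > 0 and κ‖x̄(t₀) − γ(t₀)‖² ≤ λ, then κ‖x̄(t) − γ(t)‖² ≤ λ for all t ≥ t₀. -/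
/-! With `e = x̄ - γ` one has `e' = -2κϑ e + Φ(e) - γ'`. The rotational term `Φ(e)` is orthogonal
to `e` and Cauchy–Schwarz bounds the target's contribution, so
`⟪e', e⟫ ≤ -2κϑ ‖e‖² + ν ‖e‖`; dividing by `‖e‖` gives (a). For (b), wherever `κ ‖e‖² ≥ λ` the
threshold on `ϑ` gives `2κϑ ‖e‖ ≥ ν`, so `κ ‖e‖²` is nonincreasing there, and a fencing argument
keeps it below `λ`. -/

/-- Euclidean norm on ℝ². -/
noncomputable def nrm (a : ℝ × ℝ) : ℝ := Real.sqrt (a.1 ^ 2 + a.2 ^ 2)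

open Set

lemma nrm_nonneg (a : ℝ × ℝ) : 0 ≤ nrm a := Real.sqrt_nonneg _

lemma nrm_sq (a : ℝ × ℝ) : nrm a ^ 2 = dot2 a a := by
  rw [nrm, Real.sq_sqrt (by positivity), dot2]; ring

lemma nrm_pos {a : ℝ × ℝ} (ha : a ≠ 0) : 0 < nrm a := by
  refine Real.sqrt_pos.2 ?_
  rcases not_and_or.1 (mt Prod.ext_iff.2 ha) with h | h
  · linarith [sq_pos_iff.2 h, sq_nonneg a.2]
  · linarith [sq_nonneg a.1, sq_pos_iff.2 h]

lemma abs_dot2_le (a b : ℝ × ℝ) : |dot2 a b| ≤ nrm a * nrm b := by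
  rw [nrm, nrm, ← Real.sqrt_mul (by positivity), ← Real.sqrt_sq_eq_abs]
  exact Real.sqrt_le_sqrt (by unfold dot2; nlinarith [sq_nonneg (a.1 * b.2 - a.2 * b.1)])

lemma dot2_smul_add_sub (c : ℝ) (a b g e : ℝ × ℝ) :
    dot2 (c • a + b - g) e = c * dot2 a e + dot2 b e - dot2 g e := by
  simp only [dot2, Prod.fst_add, Prod.snd_add, Prod.fst_sub, Prod.snd_sub, Prod.smul_fst,
    Prod.smul_snd, smul_eq_mul]
  ring

lemma dot2_drift_le {c ν : ℝ} {Φ : ℝ × ℝ → ℝ × ℝ} (hΦ : ∀ ξ, dot2 (Φ ξ) ξ = 0)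
    {e g : ℝ × ℝ} (hg : nrm g ≤ ν) :
    dot2 ((-c) • e + Φ e - g) e ≤ -c * nrm e ^ 2 + ν * nrm e := by
  have hge : -dot2 g e ≤ ν * nrm e :=
    (neg_le_abs _).trans ((abs_dot2_le g e).trans (mul_le_mul_of_nonneg_right hg (nrm_nonneg e)))
  rw [dot2_smul_add_sub, hΦ, nrm_sq]
  linarith

lemma dot2_drift_nonpos {c ν : ℝ} {Φ : ℝ × ℝ → ℝ × ℝ} (hΦ : ∀ ξ, dot2 (Φ ξ) ξ = 0)
    {e g : ℝ × ℝ} (hg : nrm g ≤ ν) (hν : ν ≤ c * nrm e) :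
    dot2 ((-c) • e + Φ e - g) e ≤ 0 := by
  nlinarith [dot2_drift_le (c := c) (e := e) hΦ hg, mul_le_mul_of_nonneg_left hν (nrm_nonneg e)]

lemma le_two_mul_mul_mul_of_div_le {κ ϑ ν lam r : ℝ} (hκ : 0 < κ) (hϑ : 0 ≤ ϑ) (hlam : 0 < lam)
    (hϑν : ν / (2 * √(κ * lam)) ≤ ϑ) (hr : 0 ≤ r) (hlr : lam ≤ κ * r ^ 2) :
    ν ≤ 2 * κ * ϑ * r := by
  have hν : ν ≤ 2 * ϑ * √(κ * lam) := by
    rw [div_le_iff₀ (by positivity)] at hϑν; linarith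
  have hsqrt : √(κ * lam) ≤ κ * r :=
    Real.sqrt_le_iff.2 ⟨mul_nonneg hκ.le hr, by nlinarith [mul_le_mul_of_nonneg_left hlr hκ.le]⟩
  nlinarith [mul_le_mul_of_nonneg_left hsqrt hϑ]

section Deriv

variable {f : ℝ → ℝ × ℝ} {f' : ℝ × ℝ} {t : ℝ}

theorem HasDerivAt.nrm_sq (hf : HasDerivAt f f' t) :
    HasDerivAt (fun s => nrm (f s) ^ 2) (2 * dot2 f' (f t)) t := by
  have h1 : HasDerivAt (fun s => (f s).1) f'.1 t := by simpa using hf.hasFDerivAt.fst.hasDerivAt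
  have h2 : HasDerivAt (fun s => (f s).2) f'.2 t := by simpa using hf.hasFDerivAt.snd.hasDerivAt
  simp only [_root_.nrm_sq]
  exact ((h1.mul h1).add (h2.mul h2)).congr_deriv (by simp only [dot2]; ring)

theorem HasDerivAt.nrm (hf : HasDerivAt f f' t) (h0 : f t ≠ 0) :
    HasDerivAt (fun s => nrm (f s)) (dot2 f' (f t) / nrm (f t)) t := by
  have h := (Real.hasDerivAt_sqrt (pow_pos (nrm_pos h0) 2).ne').comp t hf.nrm_sq
  simp only [Function.comp_def, Real.sqrt_sq (nrm_nonneg _)] at h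
  exact h.congr_deriv (by field_simp)

end Deriv

/-- Fencing without a strict inequality: compare `f` with the barriers `L + ε (x - a)` and let
`ε → 0`. -/
theorem image_le_of_deriv_right_nonpos_of_le {f f' : ℝ → ℝ} {a b L : ℝ}
    (hf : ContinuousOn f (Icc a b)) (hf' : ∀ x ∈ Ico a b, HasDerivWithinAt f (f' x) (Ici x) x)
    (ha : f a ≤ L) (hL : ∀ x ∈ Ico a b, L ≤ f x → f' x ≤ 0) :
    ∀ ⦃x⦄, x ∈ Icc a b → f x ≤ L := by
  intro x hx
  have hε : ∀ ε > 0, f x ≤ L + ε * (x - a) := fun ε hε =>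
    image_le_of_deriv_right_lt_deriv_boundary hf hf' (B := fun y => L + ε * (y - a))
      (by simpa using ha) (fun y => ((hasDerivAt_id y).sub_const a).const_mul ε |>.const_add L)
      (fun y hy hfy => by
        have := hL y hy (hfy ▸ le_add_of_nonneg_right (mul_nonneg hε.le (sub_nonneg.2 hy.1)))
        linarith [mul_one ε]) hx
  refine le_of_forall_pos_le_add fun δ hδ => ?_
  have hxa : 0 ≤ x - a := sub_nonneg.2 hx.1
  have hsmall : δ / (x - a + 1) * (x - a) ≤ δ := by
    rw [div_mul_eq_mul_div, div_le_iff₀ (by linarith)]; nlinarith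
  linarith [hε (δ / (x - a + 1)) (by positivity)]

theorem stmt9_general (κ ϑ ν : ℝ) (hκ : 0 < κ) (hϑ : 0 < ϑ)
    (γ γ' : ℝ → ℝ × ℝ)
    (hγd : ∀ t : ℝ, 0 ≤ t → HasDerivAt γ (γ' t) t)
    (hγb : ∀ t : ℝ, 0 ≤ t → nrm (γ' t) ≤ ν)
    (Φ : ℝ × ℝ → ℝ × ℝ)
    (hΦ : ∀ ξ : ℝ × ℝ, dot2 (Φ ξ) ξ = 0)
    (t₀ : ℝ) (ht₀ : 0 ≤ t₀)
    (x : ℝ → ℝ × ℝ)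
    (hx : ∀ t : ℝ, t₀ ≤ t →
      HasDerivAt x ((-(2 * κ * ϑ)) • (x t - γ t) + Φ (x t - γ t)) t) :
    (∀ t : ℝ, t₀ ≤ t → x t ≠ γ t →
        ∃ r' : ℝ, HasDerivAt (fun s => nrm (x s - γ s)) r' t ∧
          r' ≤ -(2 * κ * ϑ) * nrm (x t - γ t) + ν) ∧
    (∀ lam : ℝ, 0 < lam → ν / (2 * Real.sqrt (κ * lam)) ≤ ϑ →
        κ * nrm (x t₀ - γ t₀) ^ 2 ≤ lam →
        ∀ t : ℝ, t₀ ≤ t → κ * nrm (x t - γ t) ^ 2 ≤ lam) := by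
  have herr : ∀ t, t₀ ≤ t → HasDerivAt (fun s => x s - γ s)
      ((-(2 * κ * ϑ)) • (x t - γ t) + Φ (x t - γ t) - γ' t) t :=
    fun t ht => (hx t ht).sub (hγd t (ht₀.trans ht))
  refine ⟨fun t ht hne => ⟨_, (herr t ht).nrm (sub_ne_zero.2 hne), ?_⟩, ?_⟩
  · have hdrift := dot2_drift_le (c := 2 * κ * ϑ) (e := x t - γ t) hΦ (hγb t (ht₀.trans ht))
    rw [div_le_iff₀ (nrm_pos (sub_ne_zero.2 hne))]
    linarith
  intro lam hlam hϑν h₀ t ht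
  have hV := fun s (hs : t₀ ≤ s) => (herr s hs).nrm_sq.const_mul κ
  refine image_le_of_deriv_right_nonpos_of_le
    (fun s hs => (hV s hs.1).continuousAt.continuousWithinAt)
    (fun s hs => (hV s hs.1).hasDerivWithinAt) h₀ (fun s hs hlam_le => ?_) ⟨ht, le_rfl⟩
  have hmargin := le_two_mul_mul_mul_of_div_le hκ hϑ.le hlam hϑν (nrm_nonneg _) hlam_le
  have hradial := dot2_drift_nonpos hΦ (hγb s (ht₀.trans hs.1)) hmargin
  exact mul_nonpos_of_nonneg_of_nonpos hκ.le (by linarith)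

/-- Tracking behavior of the Lie bracket system x̄′ = −2κϑ(x̄ − γ) + Φ(x̄ − γ) with Φ
pointwise orthogonal to the radial direction:
(a) wherever x̄(t) ≠ γ(t), r(t) = ‖x̄(t) − γ(t)‖ is differentiable with
r′(t) ≤ −2κϑ·r(t) + ν; (b) if moreover ϑ ≥ ν/(2√(κλ)) and κ‖x̄(t₀) − γ(t₀)‖² ≤ λ,
then κ‖x̄(t) − γ(t)‖² ≤ λ for all t ≥ t₀. -/
theorem stmt9 (κ ϑ ν : ℝ) (hκ : 0 < κ) (hϑ : 0 < ϑ) (hν : 0 < ν)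
    (γ γ' : ℝ → ℝ × ℝ)
    (hγd : ∀ t : ℝ, 0 ≤ t → HasDerivAt γ (γ' t) t)
    (hγc : ContinuousOn γ' (Set.Ici 0))
    (hγb : ∀ t : ℝ, 0 ≤ t → nrm (γ' t) ≤ ν)
    (Φ : ℝ × ℝ → ℝ × ℝ) (hΦc : Continuous Φ)
    (hΦ : ∀ ξ : ℝ × ℝ, dot2 (Φ ξ) ξ = 0)
    (t₀ : ℝ) (ht₀ : 0 ≤ t₀)
    (x : ℝ → ℝ × ℝ)
    (hx : ∀ t : ℝ, t₀ ≤ t →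
      HasDerivAt x ((-(2 * κ * ϑ)) • (x t - γ t) + Φ (x t - γ t)) t) :
    (∀ t : ℝ, t₀ ≤ t → x t ≠ γ t →
        ∃ r' : ℝ, HasDerivAt (fun s => nrm (x s - γ s)) r' t ∧
          r' ≤ -(2 * κ * ϑ) * nrm (x t - γ t) + ν) ∧
    (∀ lam : ℝ, 0 < lam → ν / (2 * Real.sqrt (κ * lam)) ≤ ϑ →
        κ * nrm (x t₀ - γ t₀) ^ 2 ≤ lam →
        ∀ t : ℝ, t₀ ≤ t → κ * nrm (x t - γ t) ^ 2 ≤ lam) :=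
  stmt9_general κ ϑ ν hκ hϑ γ γ' hγd hγb Φ hΦ t₀ ht₀ x hx
end
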